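/- Let q ∈ ℝ and for ϑ = (ϑ₁, ϑ₂) ∈ ℝ² define the Hermitian 2×2 matrix H(ϑ) with entries H(ϑ)₁₁ = 3 + q, H(ϑ)₂₂ = 3 − q, H(ϑ)₁₂ = −(1 + e^{iϑ₁} + e^{iϑ₂}), H(ϑ)₂₁ = −(1 + e^{−iϑ₁} + e^{−iϑ₂}). Then { λ ∈ ℝ : ∃ ϑ ∈ ℝ², det(H(ϑ) − λ·I) = 0 } = [3 − √(9 + q²), 3 − |q|] ∪ [3 + |q|, 3 + √(9 + q²)]. -/

import Mathlib

open Matrix Complex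

/-- The Floquet fiber matrix of the Schrödinger operator on the hexagonal lattice
(graphene) with potential values `q`, `−q`. -/
noncomputable def hexFiber (q : ℝ) (ϑ : ℝ × ℝ) : Matrix (Fin 2) (Fin 2) ℂ :=
  !![(3 + q : ℝ), -(1 + Complex.exp (Complex.I * ϑ.1) + Complex.exp (Complex.I * ϑ.2));
     -(1 + Complex.exp (-Complex.I * ϑ.1) + Complex.exp (-Complex.I * ϑ.2)), (3 - q : ℝ)]

lemma hex_det_eq (q x : ℝ) (ϑ : ℝ × ℝ) :
    (hexFiber q ϑ - (x : ℂ) • (1 : Matrix (Fin 2) (Fin 2) ℂ)).det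
      = (((3 - x) ^ 2 - q ^ 2 : ℝ) : ℂ)
        - (1 + Complex.exp (Complex.I * ϑ.1) + Complex.exp (Complex.I * ϑ.2)) *
          (1 + Complex.exp (-Complex.I * ϑ.1) + Complex.exp (-Complex.I * ϑ.2)) := by
  simp [hexFiber, Matrix.det_fin_two, Matrix.sub_apply, Matrix.smul_apply, Matrix.one_apply]
  ring

lemma exp_add_exp_neg (θ : ℝ) :
    Complex.exp (Complex.I * θ) + Complex.exp (-(Complex.I * θ))
      = ((2 * Real.cos θ : ℝ) : ℂ) := by
  have h : -((θ:ℂ) * Complex.I) = ((-θ : ℝ) : ℂ) * Complex.I := by push_cast; ring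
  rw [mul_comm Complex.I (θ:ℂ), h, Complex.exp_mul_I, Complex.exp_mul_I]
  push_cast [Complex.ofReal_cos]
  simp [Complex.cos_neg, Complex.sin_neg]
  ring

lemma hex_exists_theta (q x : ℝ) (h0 : q ^ 2 ≤ (3 - x) ^ 2) (h9 : (3 - x) ^ 2 ≤ 9 + q ^ 2) :
    ∃ ϑ : ℝ × ℝ,
      (hexFiber q ϑ - (x : ℂ) • (1 : Matrix (Fin 2) (Fin 2) ℂ)).det = 0 := by
  set s : ℝ := (3 - x) ^ 2 - q ^ 2 with hs
  have hs0 : 0 ≤ s := by simp [hs]; linarith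
  have hs9 : s ≤ 9 := by simp [hs]; linarith
  have hsq3 : Real.sqrt s ≤ 3 := by
    have : Real.sqrt s ≤ Real.sqrt 9 := Real.sqrt_le_sqrt hs9
    simpa [show (9:ℝ) = 3 ^ 2 by norm_num, Real.sqrt_sq] using this
  set c : ℝ := (Real.sqrt s - 1) / 2 with hc
  have hc1 : -1 ≤ c := by have := Real.sqrt_nonneg s; simp [hc]; linarith
  have hc2 : c ≤ 1 := by simp [hc]; linarith
  set t : ℝ := Real.arccos c with ht
  have hcos : Real.cos t = c := Real.cos_arccos hc1 hc2
  refine ⟨(t, -t), ?_⟩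
  rw [hex_det_eq]
  have e1 : (Complex.I * ((-t : ℝ) : ℂ)) = -(Complex.I * (t:ℝ)) := by push_cast; ring
  have e2 : (-Complex.I * ((t : ℝ) : ℂ)) = -(Complex.I * (t:ℝ)) := by ring
  have e3 : (-Complex.I * ((-t : ℝ) : ℂ)) = Complex.I * (t:ℝ) := by push_cast; ring
  have hF : (1:ℂ) + Complex.exp (Complex.I * (t:ℝ)) + Complex.exp (-(Complex.I * (t:ℝ)))
      = ((Real.sqrt s : ℝ) : ℂ) := by
    rw [show (1:ℂ) + Complex.exp (Complex.I * (t:ℝ)) + Complex.exp (-(Complex.I * (t:ℝ)))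
        = 1 + (Complex.exp (Complex.I * (t:ℝ)) + Complex.exp (-(Complex.I * (t:ℝ)))) from by ring,
      exp_add_exp_neg t, hcos,
      show (2:ℝ) * c = Real.sqrt s - 1 from by rw [hc]; ring]
    push_cast
    ring
  simp only [e1, e2, e3]
  rw [show (1:ℂ) + Complex.exp (-(Complex.I * (t:ℝ))) + Complex.exp (Complex.I * (t:ℝ))
      = 1 + Complex.exp (Complex.I * (t:ℝ)) + Complex.exp (-(Complex.I * (t:ℝ))) from by ring,
    hF]
  have : ((Real.sqrt s : ℝ) : ℂ) * ((Real.sqrt s : ℝ) : ℂ) = (s : ℂ) := by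
    norm_cast
    exact Real.mul_self_sqrt hs0
  rw [this]
  norm_cast
  simp [hs]

/-- the spectrum of the Schrödinger operator on graphene, i.e. the set of
real `x` which are eigenvalues of some fiber matrix `H(ϑ)`, equals
`[3 − √(9+q²), 3 − |q|] ∪ [3 + |q|, 3 + √(9+q²)]`. -/
theorem graphene_spectrum (q : ℝ) :
    {x : ℝ | ∃ ϑ : ℝ × ℝ,
        (hexFiber q ϑ - (x : ℂ) • (1 : Matrix (Fin 2) (Fin 2) ℂ)).det = 0} =
      Set.Icc (3 - Real.sqrt (9 + q ^ 2)) (3 - |q|) ∪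
        Set.Icc (3 + |q|) (3 + Real.sqrt (9 + q ^ 2)) := by
  ext x
  simp only [Set.mem_setOf_eq, Set.mem_union, Set.mem_Icc]
  constructor
  · rintro ⟨ϑ, hdet⟩
    rw [hex_det_eq] at hdet
    set F : ℂ := 1 + Complex.exp (Complex.I * ϑ.1) + Complex.exp (Complex.I * ϑ.2) with hFdef
    have habs1 : ∀ θ : ℝ, ‖Complex.exp (Complex.I * θ)‖ = 1 := by
      intro θ
      rw [Complex.norm_exp]
      simp
    have hconj : (1 + Complex.exp (-Complex.I * ϑ.1) + Complex.exp (-Complex.I * ϑ.2))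
        = (starRingEnd ℂ) F := by
      simp only [hFdef, map_add, _root_.map_one, ← Complex.exp_conj, _root_.map_mul,
        Complex.conj_I, Complex.conj_ofReal]
    rw [hconj, Complex.mul_conj] at hdet
    have hre : (3 - x) ^ 2 - q ^ 2 = Complex.normSq F := by
      have := sub_eq_zero.mp hdet
      exact_mod_cast this
    have hFle : ‖F‖ ≤ 3 := by
      have a1 := norm_add_le (1 + Complex.exp (Complex.I * ϑ.1))
        (Complex.exp (Complex.I * ϑ.2))
      have a2 := norm_add_le (1:ℂ) (Complex.exp (Complex.I * ϑ.1))
      have b1 := habs1 ϑ.1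
      have b2 := habs1 ϑ.2
      rw [hFdef]
      rw [norm_one] at a2
      rw [b1] at a2
      rw [b2] at a1
      linarith
    have h9 : Complex.normSq F ≤ 9 := by
      rw [Complex.normSq_eq_norm_sq]
      nlinarith [norm_nonneg F]
    have h0 : 0 ≤ Complex.normSq F := Complex.normSq_nonneg F
    have hq : q ^ 2 ≤ (3 - x) ^ 2 := by linarith
    have hup : (3 - x) ^ 2 ≤ 9 + q ^ 2 := by linarith
    have habs : |3 - x| ≤ Real.sqrt (9 + q ^ 2) := by
      rw [← Real.sqrt_sq_eq_abs]
      exact Real.sqrt_le_sqrt hup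
    have habs2 : |q| ≤ |3 - x| := by
      rw [← Real.sqrt_sq_eq_abs, ← Real.sqrt_sq_eq_abs]
      exact Real.sqrt_le_sqrt hq
    rcases le_or_gt x 3 with hx | hx
    · left
      rw [_root_.abs_of_nonneg (by linarith : (0:ℝ) ≤ 3 - x)] at habs habs2
      constructor <;> linarith
    · right
      rw [_root_.abs_of_nonpos (by linarith : 3 - x ≤ 0)] at habs habs2
      constructor <;> linarith
  · rintro (⟨h1, h2⟩ | ⟨h1, h2⟩)
    · have hx3 : 0 ≤ 3 - x := by
        have := abs_nonneg q; linarith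
      apply hex_exists_theta
      · have h : |q| ≤ 3 - x := by linarith
        nlinarith [mul_self_le_mul_self (abs_nonneg q) h, _root_.sq_abs q]
      · have : 3 - x ≤ Real.sqrt (9 + q ^ 2) := by linarith
        nlinarith [Real.sq_sqrt (by positivity : (0:ℝ) ≤ 9 + q ^ 2), Real.sqrt_nonneg (9 + q ^ 2)]
    · have hx3 : 0 ≤ x - 3 := by
        have := abs_nonneg q; linarith
      apply hex_exists_theta
      · have h : |q| ≤ x - 3 := by linarith
        nlinarith [mul_self_le_mul_self (abs_nonneg q) h, _root_.sq_abs q]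
      · have : x - 3 ≤ Real.sqrt (9 + q ^ 2) := by linarith
        nlinarith [Real.sq_sqrt (by positivity : (0:ℝ) ≤ 9 + q ^ 2), Real.sqrt_nonneg (9 + q ^ 2)]
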